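/- arXiv:1403.4917 — 6 statements merged into one kernel-verified Lean document; each statement's English description precedes it below -/
import Mathlib

section
/- If ξ and η are nonnegative sequences converging to zero with ξ majorized by η, and if the liminf of the partial sums of (η* - ξ*) is strictly positive, then ξ is p-majorized by η for every natural number p (i.e., ξ is ∞-majorized by η). -/
open Filter Finset

/-- The decreasing rearrangement of a nonnegative sequence vanishing at infinity:
`rearr ξ n` is the `(n+1)`-st largest value, defined via sups of `n`-term sums. -/
noncomputable def rearr (ξ : ℕ → ℝ) (n : ℕ) : ℝ :=
  (⨆ s : {s : Finset ℕ // s.card = n + 1}, ∑ i ∈ s.1, ξ i)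
  - (⨆ s : {s : Finset ℕ // s.card = n}, ∑ i ∈ s.1, ξ i)

/-- Membership in `c₀⁺`: nonnegative and tending to zero. -/
def InC0Pos (ξ : ℕ → ℝ) : Prop :=
  (∀ n, 0 ≤ ξ n) ∧ Tendsto ξ atTop (nhds 0)

/-- Majorization `ξ ≺ η`: dominated partial sums of decreasing rearrangements and
equal total sums (computed in `ℝ≥0∞` to handle the nonsummable case). -/
def Majorizes (ξ η : ℕ → ℝ) : Prop :=
  (∀ n, ∑ j ∈ range n, rearr ξ j ≤ ∑ j ∈ range n, rearr η j) ∧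
    (∑' j, ENNReal.ofReal (ξ j)) = ∑' j, ENNReal.ofReal (η j)

/-- `p`-majorization `ξ ≺_p η`. -/
def PMajorizes (p : ℕ) (ξ η : ℕ → ℝ) : Prop :=
  Majorizes ξ η ∧ ∃ N, ∀ n ≥ N,
    ∑ k ∈ range (n + p), rearr ξ k ≤ ∑ k ∈ range n, rearr η k

/-- `∞`-majorization `ξ ≺_∞ η`. -/
def InftyMajorizes (ξ η : ℕ → ℝ) : Prop := ∀ p : ℕ, PMajorizes p ξ η

/-- Strong majorization `ξ ≼ η`. -/
def StrongMajorizes (ξ η : ℕ → ℝ) : Prop :=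
  (∀ n, ∑ j ∈ range n, rearr ξ j ≤ ∑ j ∈ range n, rearr η j) ∧
    Filter.liminf (fun n => ∑ j ∈ range n, (rearr η j - rearr ξ j)) atTop = 0

/-- Approximate `p`-majorization `ξ ≾_p η`. -/
def ApproxPMajorizes (p : ℕ) (ξ η : ℕ → ℝ) : Prop :=
  Majorizes ξ η ∧ ∀ ε > 0, ∃ N, ∀ n ≥ N,
    ∑ k ∈ range (n + p), rearr ξ k ≤ ∑ k ∈ range n, rearr η k + ε * rearr η n


noncomputable def Sb (ξ : ℕ → ℝ) (n : ℕ) : ℝ :=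
  ⨆ s : {s : Finset ℕ // s.card = n}, ∑ i ∈ s.1, ξ i

instance Sb_nonempty (n : ℕ) : Nonempty {s : Finset ℕ // s.card = n} :=
  ⟨⟨Finset.range n, Finset.card_range n⟩⟩

lemma bddAbove_Sb (ξ : ℕ → ℝ) (hb : ∃ B, ∀ i, ξ i ≤ B) (n : ℕ) :
    BddAbove (Set.range fun s : {s : Finset ℕ // s.card = n} => ∑ i ∈ s.1, ξ i) := by
  obtain ⟨B, hB⟩ := hb
  refine ⟨n * B, ?_⟩
  rintro x ⟨s, rfl⟩
  calc ∑ i ∈ s.1, ξ i ≤ s.1.card • B :=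
        Finset.sum_le_card_nsmul _ _ _ (fun i _ => hB i)
    _ = n * B := by rw [s.2, nsmul_eq_mul]

lemma Sb_zero (ξ : ℕ → ℝ) : Sb ξ 0 = 0 := by
  have h : (fun s : {s : Finset ℕ // s.card = 0} => ∑ i ∈ s.1, ξ i) = fun _ => 0 := by
    funext s
    simp [Finset.card_eq_zero.mp s.2]
  unfold Sb
  rw [h, ciSup_const]

lemma sum_rearr (ξ : ℕ → ℝ) (n : ℕ) :
    ∑ j ∈ Finset.range n, rearr ξ j = Sb ξ n := by
  have : ∀ j, rearr ξ j = Sb ξ (j + 1) - Sb ξ j := fun j => rfl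
  simp only [this]
  rw [Finset.sum_range_sub (Sb ξ), Sb_zero, sub_zero]

lemma Sb_add_le (ξ : ℕ → ℝ) (hpos : ∀ i, 0 ≤ ξ i) (hb : ∃ B, ∀ i, ξ i ≤ B)
    (p M : ℕ) (ε : ℝ) (hε : ∀ i, M ≤ i → ξ i ≤ ε) (n : ℕ) (hn : M ≤ n) :
    Sb ξ (n + p) ≤ Sb ξ n + p * ε := by
  apply ciSup_le
  rintro ⟨s, hs⟩
  have key : (s.filter (fun i => M ≤ i)).card + (s.filter (fun i => ¬ M ≤ i)).card = s.card :=
    Finset.card_filter_add_card_filter_not (p := fun i => M ≤ i)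
  have h1 : (s.filter (fun i => ¬ M ≤ i)).card ≤ M := by
    refine le_trans (Finset.card_le_card ?_) (le_of_eq (Finset.card_range M))
    intro i hi
    simp only [Finset.mem_filter, not_le] at hi
    exact Finset.mem_range.mpr hi.2
  have hcard : p ≤ (s.filter (fun i => M ≤ i)).card := by omega
  obtain ⟨t, hts, htc⟩ := Finset.exists_subset_card_eq hcard
  have hts' : t ⊆ s := hts.trans (Finset.filter_subset _ _)
  have hsd : (s \ t).card = n := by
    rw [Finset.card_sdiff_of_subset hts', hs, htc]; omega
  have hsplit : ∑ i ∈ s \ t, ξ i + ∑ i ∈ t, ξ i = ∑ i ∈ s, ξ i :=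
    Finset.sum_sdiff hts'
  have h2 : ∑ i ∈ s \ t, ξ i ≤ Sb ξ n :=
    le_ciSup (bddAbove_Sb ξ hb n) (⟨s \ t, hsd⟩ : {u : Finset ℕ // u.card = n})
  have h3 : ∑ i ∈ t, ξ i ≤ p * ε := by
    calc ∑ i ∈ t, ξ i ≤ t.card • ε := by
          refine Finset.sum_le_card_nsmul _ _ _ (fun i hi => ?_)
          exact hε i (Finset.mem_filter.mp (hts hi)).2
      _ = p * ε := by rw [htc, nsmul_eq_mul]
  linarith

theorem statement0 (ξ η : ℕ → ℝ) (hξ : InC0Pos ξ) (hη : InC0Pos η)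
    (hmaj : Majorizes ξ η)
    (hliminf : 0 < Filter.liminf
      (fun n => ∑ j ∈ range n, (rearr η j - rearr ξ j)) atTop) :
    InftyMajorizes ξ η := by
  obtain ⟨hξ0, hξlim⟩ := hξ
  have hbξ : ∃ B, ∀ i, ξ i ≤ B := by
    obtain ⟨B, hB⟩ := hξlim.bddAbove_range
    exact ⟨B, fun i => hB (Set.mem_range_self i)⟩
  set D := fun n => ∑ j ∈ range n, (rearr η j - rearr ξ j) with hD
  have hDval : ∀ n, D n = Sb η n - Sb ξ n := by
    intro n
    rw [hD]
    simp only [Finset.sum_sub_distrib, sum_rearr]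
  have hbd : IsBoundedUnder (· ≥ ·) atTop D :=
    Filter.isBoundedUnder_of ⟨0, fun n => by
      simp only [hD, Finset.sum_sub_distrib, ge_iff_le, sub_nonneg]
      exact hmaj.1 n⟩
  set L := Filter.liminf D atTop with hL
  have hL2 : 0 < L / 2 := by linarith
  have hc : ∀ᶠ n in atTop, L / 2 < D n :=
    Filter.eventually_lt_of_lt_liminf (by linarith) hbd
  obtain ⟨N₂, hN₂⟩ := Filter.eventually_atTop.mp hc
  intro p
  refine ⟨hmaj, ?_⟩
  set ε := L / 2 / (p + 1) with hε
  have hεpos : 0 < ε := by positivity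
  have hξε : ∀ᶠ i in atTop, ξ i < ε := hξlim.eventually_lt_const hεpos
  obtain ⟨M, hM⟩ := Filter.eventually_atTop.mp hξε
  refine ⟨max M N₂, fun n hn => ?_⟩
  have hnM : M ≤ n := le_trans (le_max_left _ _) hn
  have hnN₂ : N₂ ≤ n := le_trans (le_max_right _ _) hn
  have hpε : (p : ℝ) * ε ≤ L / 2 := by
    rw [hε, mul_div_assoc']
    rw [div_le_iff₀ (by positivity : (0:ℝ) < (p:ℝ) + 1)]
    nlinarith [hL2, Nat.cast_nonneg (α := ℝ) p]
  have h1 : Sb ξ (n + p) ≤ Sb ξ n + p * ε :=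
    Sb_add_le ξ hξ0 hbξ p M ε (fun i hi => (hM i hi).le) n hnM
  have h2 : L / 2 < Sb η n - Sb ξ n := by rw [← hDval]; exact hN₂ n hnN₂
  rw [sum_rearr, sum_rearr]
  linarith
end

section
/- For a decreasing nonnegative sequence η tending to zero, let ξ = (1/2)·D₂η be half the 2-ampliation, i.e., ξ = ⟨η₁/2, η₁/2, η₂/2, η₂/2, ...⟩. Then ξ is ∞-majorized by η: for every p ∈ ℕ there exists N such that ∑_{k=1}^{n+p} ξ_k ≤ ∑_{k=1}^n η_k for all n ≥ N, and moreover ∑_{j=1}^n ξ_j ≤ ∑_{j=1}^n η_j for all n and ∑ ξ = ∑ η. -/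
open Filter Finset

lemma pair_sum (η ξ : ℕ → ℝ) (hξ : ∀ n, ξ n = η (n / 2) / 2) (n : ℕ) :
    ∑ k ∈ range (2 * n), ξ k = ∑ j ∈ range n, η j := by
  induction n with
  | zero => simp
  | succ n ih =>
    have h : 2 * (n + 1) = (2 * n + 1) + 1 := by ring
    rw [h, Finset.sum_range_succ, Finset.sum_range_succ, Finset.sum_range_succ, ih, hξ, hξ]
    have h1 : (2 * n) / 2 = n := by omega
    have h2 : (2 * n + 1) / 2 = n := by omega
    rw [h1, h2]; ring

theorem statement3 (η : ℕ → ℝ) (hmono : Antitone η) (hpos : ∀ n, 0 ≤ η n)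
    (hlim : Tendsto η atTop (nhds 0))
    (ξ : ℕ → ℝ) (hξ : ∀ n, ξ n = η (n / 2) / 2) :
    (∀ p : ℕ, ∃ N, ∀ n ≥ N,
        ∑ k ∈ range (n + p), ξ k ≤ ∑ k ∈ range n, η k) ∧
    (∀ n, ∑ j ∈ range n, ξ j ≤ ∑ j ∈ range n, η j) ∧
    (∑' j, ENNReal.ofReal (ξ j)) = ∑' j, ENNReal.ofReal (η j) := by
  have hξpos : ∀ n, 0 ≤ ξ n := fun n => by rw [hξ]; exact div_nonneg (hpos _) (by norm_num)
  have key := pair_sum η ξ hξ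
  have mono : ∀ {a b : ℕ}, a ≤ b → ∑ k ∈ range a, ξ k ≤ ∑ k ∈ range b, ξ k := by
    intro a b hab
    exact Finset.sum_le_sum_of_subset_of_nonneg (Finset.range_subset_range.mpr hab)
      (fun i _ _ => hξpos i)
  have monoη : ∀ {a b : ℕ}, a ≤ b → ∑ k ∈ range a, η k ≤ ∑ k ∈ range b, η k := by
    intro a b hab
    exact Finset.sum_le_sum_of_subset_of_nonneg (Finset.range_subset_range.mpr hab)
      (fun i _ _ => hpos i)
  refine ⟨?_, ?_, ?_⟩
  · intro p
    refine ⟨p, fun n hn => ?_⟩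
    set m := (n + p + 1) / 2 with hm
    calc ∑ k ∈ range (n + p), ξ k ≤ ∑ k ∈ range (2 * m), ξ k := mono (by omega)
      _ = ∑ j ∈ range m, η j := key m
      _ ≤ ∑ j ∈ range n, η j := monoη (by omega)
  · intro n
    calc ∑ j ∈ range n, ξ j ≤ ∑ k ∈ range (2 * n), ξ k := mono (by omega)
      _ = ∑ j ∈ range n, η j := key n
  · have hterm : ∀ k, ENNReal.ofReal (ξ k) = ENNReal.ofReal (η (k / 2)) / 2 := by
      intro k
      rw [hξ, ENNReal.ofReal_div_of_pos (by norm_num)]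
      norm_num
    calc (∑' j, ENNReal.ofReal (ξ j)) = ∑' j, ENNReal.ofReal (η (j / 2)) / 2 := by
          simp_rw [hterm]
      _ = ∑' p : ℕ × Fin 2, ENNReal.ofReal (η p.1) / 2 := by
          rw [← Equiv.tsum_eq (Nat.divModEquiv 2) (fun p => ENNReal.ofReal (η p.1) / 2)]
          rfl
      _ = ∑' q : ℕ, ∑' _ : Fin 2, ENNReal.ofReal (η q) / 2 := ENNReal.tsum_prod (f := fun q (_ : Fin 2) => ENNReal.ofReal (η q) / 2)
      _ = ∑' j, ENNReal.ofReal (η j) := by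
          congr 1; funext q
          rw [tsum_fintype]
          simp only [Finset.sum_const, Finset.card_univ, Fintype.card_fin, nsmul_eq_mul]
          rw [show ((2:ℕ):ENNReal) = 2 from by norm_num,
            ENNReal.mul_div_cancel' (by norm_num) (by norm_num)]
end

section
/- For a decreasing nonnegative sequence η tending to zero and ξ = (1/2)·D₂η its halved 2-ampliation, the partial sums satisfy ⌊k/2⌋·η_k ≤ ∑_{j=1}^k (η_j - ξ_j) ≤ ⌈k/2⌉·η_{⌈k/2⌉} for all k. -/
open Filter Finset

theorem statement4 (η : ℕ → ℝ) (hmono : Antitone η) (hpos : ∀ n, 0 ≤ η n)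
    (hlim : Tendsto η atTop (nhds 0))
    (ξ : ℕ → ℝ) (hξ : ∀ n, ξ n = η (n / 2) / 2) :
    ∀ k ≥ 1,
      ((k / 2 : ℕ) : ℝ) * η (k - 1) ≤ ∑ j ∈ range k, (η j - ξ j) ∧
      ∑ j ∈ range k, (η j - ξ j) ≤ (((k + 1) / 2 : ℕ) : ℝ) * η ((k - 1) / 2) := by
  intro k hk
  have hxi0 : ∀ m, ξ (2*m) = η m / 2 := fun m => by
    rw [hξ]; congr 2; omega
  have hxi1 : ∀ m, ξ (2*m+1) = η m / 2 := fun m => by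
    rw [hξ]; congr 2; omega
  have hA : ∀ m, ∑ j ∈ range (2*m), ξ j = ∑ i ∈ range m, η i := by
    intro m
    induction m with
    | zero => simp
    | succ m ih =>
      have h2 : 2*(m+1) = (2*m+1)+1 := by ring
      rw [h2, Finset.sum_range_succ, Finset.sum_range_succ (f := ξ), ih,
        Finset.sum_range_succ, hxi0, hxi1]
      ring
  have hsum : ∀ n, ∑ j ∈ range n, (η j - ξ j)
      = ∑ j ∈ range n, η j - ∑ j ∈ range n, ξ j := fun n => Finset.sum_sub_distrib η ξ
  rcases Nat.even_or_odd k with ⟨m, hm⟩ | ⟨m, hm⟩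
  · -- even case, k = 2*m with m ≥ 1
    have hk2 : k = 2*m := by omega
    subst hk2
    have hm1 : 1 ≤ m := by omega
    have hS : ∑ j ∈ range (2*m), (η j - ξ j) = ∑ j ∈ Finset.Ico m (2*m), η j := by
      rw [hsum, hA, Finset.sum_Ico_eq_sub η (by omega)]
    have hcard : (Finset.Ico m (2*m)).card = m := by
      rw [Nat.card_Ico]; omega
    constructor
    · have hlow : ∀ x ∈ Finset.Ico m (2*m), η (2*m-1) ≤ η x := by
        intro x hx
        rw [Finset.mem_Ico] at hx
        exact hmono (by omega)
      have := Finset.card_nsmul_le_sum (Finset.Ico m (2*m)) η (η (2*m-1)) hlow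
      rw [hcard, nsmul_eq_mul] at this
      have hdiv : (2*m)/2 = m := by omega
      rw [hS, hdiv]
      exact this
    · have hup : ∀ x ∈ Finset.Ico m (2*m), η x ≤ η (m-1) := by
        intro x hx
        rw [Finset.mem_Ico] at hx
        exact hmono (by omega)
      have := Finset.sum_le_card_nsmul (Finset.Ico m (2*m)) η (η (m-1)) hup
      rw [hcard, nsmul_eq_mul] at this
      have hdiv : (2*m+1)/2 = m := by omega
      have hdiv2 : (2*m-1)/2 = m - 1 := by omega
      rw [hS, hdiv, hdiv2]
      exact this
  · -- odd case, k = 2*m+1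
    have hk2 : k = 2*m+1 := by omega
    subst hk2
    have hS : ∑ j ∈ range (2*m+1), (η j - ξ j)
        = η m / 2 + ∑ j ∈ Finset.Ico (m+1) (2*m+1), η j := by
      rw [hsum, Finset.sum_range_succ (f := ξ), hA, hxi0]
      have h1 : ∑ j ∈ Finset.Ico m (2*m+1), η j
          = ∑ j ∈ range (2*m+1), η j - ∑ j ∈ range m, η j :=
        Finset.sum_Ico_eq_sub η (by omega)
      have h2 : ∑ j ∈ Finset.Ico m (2*m+1), η j
          = η m + ∑ j ∈ Finset.Ico (m+1) (2*m+1), η j :=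
        Finset.sum_eq_sum_Ico_succ_bot (by omega) η
      linarith
    have hcard : (Finset.Ico (m+1) (2*m+1)).card = m := by
      rw [Nat.card_Ico]; omega
    constructor
    · have hlow : ∀ x ∈ Finset.Ico (m+1) (2*m+1), η (2*m) ≤ η x := by
        intro x hx
        rw [Finset.mem_Ico] at hx
        exact hmono (by omega)
      have h1 := Finset.card_nsmul_le_sum (Finset.Ico (m+1) (2*m+1)) η (η (2*m)) hlow
      rw [hcard, nsmul_eq_mul] at h1
      have hdiv : (2*m+1)/2 = m := by omega
      have hdiv2 : 2*m+1-1 = 2*m := by omega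
      rw [hS, hdiv, hdiv2]
      have := hpos m
      linarith
    · have hup : ∀ x ∈ Finset.Ico (m+1) (2*m+1), η x ≤ η m := by
        intro x hx
        rw [Finset.mem_Ico] at hx
        exact hmono (by omega)
      have h1 := Finset.sum_le_card_nsmul (Finset.Ico (m+1) (2*m+1)) η (η m) hup
      rw [hcard, nsmul_eq_mul] at h1
      have hdiv : (2*m+1+1)/2 = m+1 := by omega
      have hdiv2 : (2*m+1-1)/2 = m := by omega
      rw [hS, hdiv, hdiv2]
      have := hpos m
      push_cast
      linarith
end

section
/- For a decreasing nonnegative sequence η tending to zero, the halved 2-ampliation ξ = (1/2)·D₂η is strongly majorized by η if and only if liminf_k k·η_k = 0. -/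
open Filter Finset

lemma myliminf_eq_zero_iff (h : ℕ → ℝ) (hpos : ∀ n, 0 ≤ h n) :
    Filter.liminf h atTop = 0 ↔
      (Tendsto h atTop atTop ∨ ∀ ε > 0, ∃ᶠ n in atTop, h n ≤ ε) := by
  rw [Filter.liminf_eq]
  constructor
  · intro hsup
    by_cases ht : Tendsto h atTop atTop
    · exact Or.inl ht
    right
    rw [tendsto_atTop] at ht
    push_neg at ht
    obtain ⟨b, hb⟩ := ht
    have hb' : ∃ᶠ n in atTop, h n < b := hb
    have hbdd : BddAbove {a | ∀ᶠ n in atTop, a ≤ h n} := by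
      refine ⟨b, fun a ha => ?_⟩
      obtain ⟨n, hn1, hn2⟩ := (hb'.and_eventually ha).exists
      linarith
    intro ε hε
    by_contra hc
    rw [Filter.not_frequently] at hc
    have hε' : ε ∈ {a | ∀ᶠ n in atTop, a ≤ h n} :=
      hc.mono fun n hn => le_of_lt (lt_of_not_ge hn)
    have := le_csSup hbdd hε'
    rw [hsup] at this
    linarith
  · rintro (ht | hfreq)
    · have huniv : {a : ℝ | ∀ᶠ n in atTop, a ≤ h n} = Set.univ := by
        ext a
        simp only [Set.mem_setOf_eq, Set.mem_univ, iff_true]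
        exact (tendsto_atTop.mp ht a)
      rw [huniv]
      exact Real.sSup_univ
    · have h0 : (0:ℝ) ∈ {a | ∀ᶠ n in atTop, a ≤ h n} :=
        Filter.Eventually.of_forall hpos
      have hbdd : BddAbove {a : ℝ | ∀ᶠ n in atTop, a ≤ h n} := by
        refine ⟨1, fun a ha => ?_⟩
        obtain ⟨n, hn1, hn2⟩ := ((hfreq 1 one_pos).and_eventually ha).exists
        linarith
      have hle : ∀ ε > 0, sSup {a : ℝ | ∀ᶠ n in atTop, a ≤ h n} ≤ ε := by
        intro ε hε
        refine csSup_le ⟨0, h0⟩ fun a ha => ?_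
        obtain ⟨n, hn1, hn2⟩ := ((hfreq ε hε).and_eventually ha).exists
        linarith
      have h1 : 0 ≤ sSup {a : ℝ | ∀ᶠ n in atTop, a ≤ h n} := le_csSup hbdd h0
      have h2 : sSup {a : ℝ | ∀ᶠ n in atTop, a ≤ h n} ≤ 0 := by
        by_contra hc
        push_neg at hc
        have := hle _ (half_pos hc)
        linarith
      linarith

lemma my_sum_xi (η ξ : ℕ → ℝ) (hξ : ∀ n, ξ n = η (n / 2) / 2) (m : ℕ) :
    ∑ j ∈ range (2 * m), ξ j = ∑ i ∈ range m, η i := by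
  induction m with
  | zero => simp
  | succ m ih =>
    have h : 2 * (m + 1) = (2 * m) + 1 + 1 := by ring
    rw [h, Finset.sum_range_succ, Finset.sum_range_succ, ih, Finset.sum_range_succ,
      hξ, hξ]
    have h1 : (2 * m) / 2 = m := by omega
    have h2 : (2 * m + 1) / 2 = m := by omega
    rw [h1, h2]; ring

lemma my_upper_bd (η : ℕ → ℝ) (hmono : Antitone η) (a b : ℕ) (h : a ≤ b) :
    ∑ j ∈ range b, η j - ∑ j ∈ range a, η j ≤ ((b - a : ℕ) : ℝ) * η a := by
  rw [← Finset.sum_Ico_eq_sub _ h]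
  have := Finset.sum_le_card_nsmul (Finset.Ico a b) η (η a)
    (fun j hj => hmono (Finset.mem_Ico.mp hj).1)
  simpa [Nat.card_Ico, nsmul_eq_mul] using this

lemma my_lower_bd (η : ℕ → ℝ) (hmono : Antitone η) (a b : ℕ) (h : a ≤ b) :
    ((b - a : ℕ) : ℝ) * η (b - 1) ≤ ∑ j ∈ range b, η j - ∑ j ∈ range a, η j := by
  rw [← Finset.sum_Ico_eq_sub _ h]
  have := Finset.card_nsmul_le_sum (Finset.Ico a b) η (η (b - 1))
    (fun j hj => hmono (by have := Finset.mem_Ico.mp hj; omega))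
  simpa [Nat.card_Ico, nsmul_eq_mul] using this


theorem statement5 (η : ℕ → ℝ) (hmono : Antitone η) (hpos : ∀ n, 0 ≤ η n)
    (hlim : Tendsto η atTop (nhds 0))
    (ξ : ℕ → ℝ) (hξ : ∀ n, ξ n = η (n / 2) / 2) :
    ((∀ n, ∑ j ∈ range n, ξ j ≤ ∑ j ∈ range n, η j) ∧
      Filter.liminf (fun n => ∑ j ∈ range n, (η j - ξ j)) atTop = 0) ↔
    Filter.liminf (fun k : ℕ => ((k : ℝ) + 1) * η k) atTop = 0 := by
  set f : ℕ → ℝ := fun n => ∑ j ∈ range n, (η j - ξ j) with hfdef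
  set g : ℕ → ℝ := fun k => ((k : ℝ) + 1) * η k with hgdef
  set A : ℕ → ℝ := fun n => ∑ j ∈ range n, η j with hAdef
  have hB : ∀ m, ∑ j ∈ range (2 * m), ξ j = A m := my_sum_xi η ξ hξ
  have hfA : ∀ n, f n = A n - ∑ j ∈ range n, ξ j := by
    intro n; rw [hfdef]; simp [Finset.sum_sub_distrib, hAdef]
  have hAmono : ∀ a b : ℕ, a ≤ b → A a ≤ A b := by
    intro a b hab
    exact Finset.sum_le_sum_of_subset_of_nonneg (Finset.range_subset_range.mpr hab)
      (fun i _ _ => hpos i)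
  have hfe : ∀ m, f (2 * m) = A (2 * m) - A m := by
    intro m; rw [hfA, hB]
  have hfo : ∀ m, f (2 * m + 1) = A (2 * m + 1) - A m - η m / 2 := by
    intro m
    rw [hfA]
    have : ∑ j ∈ range (2 * m + 1), ξ j = A m + η m / 2 := by
      rw [Finset.sum_range_succ, hB, hξ]
      have hd : (2 * m) / 2 = m := by omega
      rw [hd]
    rw [this]; ring
  have hgpos : ∀ k, 0 ≤ g k := by
    intro k
    exact mul_nonneg (by positivity) (hpos k)
  have hfpos : ∀ n, 0 ≤ f n := by
    intro n
    rcases Nat.even_or_odd n with ⟨m, hm⟩ | ⟨m, hm⟩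
    · have : n = 2 * m := by omega
      rw [this, hfe]
      have := hAmono m (2 * m) (by omega)
      linarith
    · have : n = 2 * m + 1 := by omega
      rw [this, hfo]
      have h1 : A (m + 1) ≤ A (2 * m + 1) := hAmono _ _ (by omega)
      have h2 : A (m + 1) = A m + η m := Finset.sum_range_succ η m
      have := hpos m
      linarith
  have hF1 : ∀ k, f (2 * k + 2) ≤ g k := by
    intro k
    have h2 : 2 * k + 2 = 2 * (k + 1) := by ring
    rw [h2, hfe]
    have hu := my_upper_bd η hmono (k + 1) (2 * (k + 1)) (by omega)
    have hc : (2 * (k + 1) - (k + 1) : ℕ) = k + 1 := by omega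
    rw [hc] at hu
    have hA1 : A (k + 1) ≤ A (2 * (k + 1)) := hAmono _ _ (by omega)
    have hηk : η (k + 1) ≤ η k := hmono (by omega)
    have hcast : ((k + 1 : ℕ) : ℝ) = (k : ℝ) + 1 := by push_cast; ring
    rw [hgdef]
    have := hpos (k + 1)
    calc A (2 * (k + 1)) - A (k + 1) ≤ ((k + 1 : ℕ) : ℝ) * η (k + 1) := hu
    _ ≤ ((k + 1 : ℕ) : ℝ) * η k := by
        apply mul_le_mul_of_nonneg_left hηk (by positivity)
    _ = ((k : ℝ) + 1) * η k := by rw [hcast]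
  have hF2 : ∀ n, 2 ≤ n → g (n - 1) ≤ 3 * f n := by
    intro n hn
    rcases Nat.even_or_odd n with ⟨m, hm⟩ | ⟨m, hm⟩
    · have hn2 : n = 2 * m := by omega
      have hm1 : 1 ≤ m := by omega
      subst hn2
      rw [hfe]
      have hl := my_lower_bd η hmono m (2 * m) (by omega)
      have hc : (2 * m - m : ℕ) = m := by omega
      rw [hc] at hl
      have hidx : 2 * m - 1 = 2 * m - 1 := rfl
      rw [hgdef]
      have hcast : ((2 * m - 1 : ℕ) : ℝ) + 1 = 2 * (m : ℝ) := by
        have : ((2 * m - 1 : ℕ) : ℝ) = 2 * (m : ℝ) - 1 := by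
          push_cast [Nat.cast_sub (by omega : 1 ≤ 2 * m)]
          ring
        rw [this]; ring
      simp only []
      rw [hcast]
      have hη := hpos (2 * m - 1)
      have hf0 := hfpos (2 * m)
      rw [hfe] at hf0
      nlinarith [hl]
    · have hn2 : n = 2 * m + 1 := by omega
      have hm1 : 1 ≤ m := by omega
      subst hn2
      rw [hfo]
      have hl := my_lower_bd η hmono (m + 1) (2 * m + 1) (by omega)
      have hc : (2 * m + 1 - (m + 1) : ℕ) = m := by omega
      have hc2 : 2 * m + 1 - 1 = 2 * m := by omega
      rw [hc, hc2] at hl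
      have hA1 : A (m + 1) = A m + η m := Finset.sum_range_succ η m
      have hidx : (2 * m + 1 - 1 : ℕ) = 2 * m := by omega
      rw [hgdef]
      simp only []
      rw [hidx]
      have hη := hpos (2 * m)
      have hηm := hpos m
      have hmR : (1 : ℝ) ≤ (m : ℝ) := by exact_mod_cast hm1
      have hx : η (2 * m) * 1 ≤ η (2 * m) * (m : ℝ) :=
        mul_le_mul_of_nonneg_left hmR hη
      push_cast
      nlinarith [hl]
  have h2k2 : Tendsto (fun k : ℕ => 2 * k + 2) atTop atTop :=
    tendsto_atTop_mono (fun k => by simp only [id_eq]; omega) tendsto_id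
  have hsub1 : Tendsto (fun n : ℕ => n - 1) atTop atTop := tendsto_sub_atTop_nat 1
  have hmain : Filter.liminf f atTop = 0 ↔ Filter.liminf g atTop = 0 := by
    rw [myliminf_eq_zero_iff f hfpos, myliminf_eq_zero_iff g hgpos]
    constructor
    · rintro (ht | hfreq)
      · left
        refine tendsto_atTop_mono (fun k => hF1 k) (ht.comp h2k2)
      · right
        intro ε hε
        have h3 := hfreq (ε / 3) (by linarith)
        have h4 : ∃ᶠ n in atTop, 2 ≤ n ∧ f n ≤ ε / 3 :=
          (h3.and_eventually (eventually_ge_atTop 2)).mono (fun n hn => ⟨hn.2, hn.1⟩)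
        have h5 : ∃ᶠ n in atTop, g (n - 1) ≤ ε := by
          refine h4.mono fun n hn => ?_
          have := hF2 n hn.1
          linarith [hn.2]
        exact hsub1.frequently h5
    · rintro (ht | hfreq)
      · left
        have ht3 : Tendsto (fun n : ℕ => g (n - 1) / 3) atTop atTop :=
          (ht.comp hsub1).atTop_div_const (by norm_num)
        refine tendsto_atTop_mono' atTop ?_ ht3
        filter_upwards [eventually_ge_atTop 2] with n hn
        have := hF2 n hn
        linarith
      · right
        intro ε hε
        have h3 : ∃ᶠ k in atTop, f (2 * k + 2) ≤ ε :=
          (hfreq ε hε).mono fun k hk => le_trans (hF1 k) hk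
        exact h2k2.frequently h3
  have hsumle : ∀ n, ∑ j ∈ range n, ξ j ≤ ∑ j ∈ range n, η j := by
    intro n
    have := hfpos n
    rw [hfA] at this
    rw [hAdef] at this
    simp only [] at this
    linarith
  constructor
  · rintro ⟨-, h⟩
    exact hmain.mp h
  · intro h
    exact ⟨hsumle, hmain.mpr h⟩
end

section
/- ξ is ∞-majorized by η if and only if ξ is approximately ∞-majorized by η (i.e., ξ ≺_p η for all p ∈ ℕ if and only if ξ ≾_p η for all p ∈ ℕ). -/
open Filter Finset

lemma rearr_nonneg {η : ℕ → ℝ} (hη : InC0Pos η) (n : ℕ) : 0 ≤ rearr η n := by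
  obtain ⟨M, hM⟩ := hη.2.bddAbove_range
  have hηM : ∀ i, η i ≤ M := fun i => hM ⟨i, rfl⟩
  have bdd : ∀ m : ℕ, BddAbove
      (Set.range fun s : {s : Finset ℕ // s.card = m} => ∑ i ∈ s.1, η i) := by
    intro m
    refine ⟨m • M, ?_⟩
    rintro x ⟨s, rfl⟩
    have := Finset.sum_le_card_nsmul s.1 η M (fun i _ => hηM i)
    rwa [s.2] at this
  have hne : ∀ m : ℕ, Nonempty {s : Finset ℕ // s.card = m} :=
    fun m => ⟨⟨Finset.range m, Finset.card_range m⟩⟩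
  rw [rearr, sub_nonneg]
  haveI := hne n
  refine ciSup_le fun s => ?_
  obtain ⟨j, hj⟩ := Infinite.exists_notMem_finset s.1
  calc ∑ i ∈ s.1, η i ≤ η j + ∑ i ∈ s.1, η i := by linarith [hη.1 j]
    _ = ∑ i ∈ insert j s.1, η i := (Finset.sum_insert hj).symm
    _ ≤ _ := le_ciSup (bdd (n + 1))
        ⟨insert j s.1, by rw [Finset.card_insert_of_notMem hj, s.2]⟩

theorem statement7 (ξ η : ℕ → ℝ) (hξ : InC0Pos ξ) (hη : InC0Pos η) :
    InftyMajorizes ξ η ↔ ∀ p : ℕ, ApproxPMajorizes p ξ η := by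
  constructor
  · intro h p
    obtain ⟨hmaj, N, hN⟩ := h p
    refine ⟨hmaj, fun ε hε => ⟨N, fun n hn => ?_⟩⟩
    have := hN n hn
    have h0 := mul_nonneg hε.le (rearr_nonneg hη n)
    linarith
  · intro h p
    obtain ⟨hmaj, hap⟩ := h (p + 1)
    obtain ⟨N, hN⟩ := hap 1 one_pos
    refine ⟨hmaj, N + 1, fun n hn => ?_⟩
    have h1 := hN (n - 1) (by omega)
    have he : n - 1 + (p + 1) = n + p := by omega
    rw [he] at h1
    have h2 : ∑ k ∈ range (n - 1), rearr η k + 1 * rearr η (n - 1)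
        = ∑ k ∈ range n, rearr η k := by
      have hn1 : n - 1 + 1 = n := by omega
      rw [one_mul, ← Finset.sum_range_succ, hn1]
    linarith
end

section
/- For every η ∈ c₀⁺ there exists ξ ∈ c₀* such that ξ is ∞-majorized by η and ξ is strongly majorized by η (both ξ ≺_∞ η and ξ ≼ η hold). -/
open Filter Finset

noncomputable def Sig (ψ : ℕ → ℝ) (n : ℕ) : ℝ :=
  ⨆ s : {s : Finset ℕ // s.card = n}, ∑ i ∈ s.1, ψ i

lemma rearr_eq (ψ : ℕ → ℝ) (n : ℕ) : rearr ψ n = Sig ψ (n+1) - Sig ψ n := rfl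

instance (n : ℕ) : Nonempty {s : Finset ℕ // s.card = n} := ⟨⟨range n, card_range n⟩⟩

section basic
variable {ψ : ℕ → ℝ} {C : ℝ} (hpos : ∀ n, 0 ≤ ψ n) (hC : ∀ n, ψ n ≤ C)

include hC in
lemma bdd_sums (n : ℕ) :
    BddAbove (Set.range fun s : {s : Finset ℕ // s.card = n} => ∑ i ∈ s.1, ψ i) := by
  refine ⟨n * C, ?_⟩
  rintro _ ⟨s, rfl⟩
  calc ∑ i ∈ s.1, ψ i ≤ ∑ i ∈ s.1, C := Finset.sum_le_sum fun i _ => hC i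
    _ = s.1.card * C := by rw [Finset.sum_const, nsmul_eq_mul]
    _ = n * C := by rw [s.2]

lemma Sig_zero (ψ : ℕ → ℝ) : Sig ψ 0 = 0 := by
  have : ∀ s : {s : Finset ℕ // s.card = 0}, ∑ i ∈ s.1, ψ i = 0 := by
    rintro ⟨s, hs⟩
    simp [Finset.card_eq_zero.mp hs]
  simp only [Sig, this, ciSup_const]

lemma sum_range_rearr (ψ : ℕ → ℝ) (n : ℕ) : ∑ j ∈ range n, rearr ψ j = Sig ψ n := by
  have := Finset.sum_range_sub (f := Sig ψ) n
  simp only [rearr_eq]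
  rw [this, Sig_zero, sub_zero]

include hpos hC in
lemma Sig_le_sig_succ (n : ℕ) : Sig ψ n ≤ Sig ψ (n+1) := by
  refine ciSup_le fun s => ?_
  obtain ⟨x, hx⟩ := Finset.exists_notMem s.1
  have hcard : (insert x s.1).card = n + 1 := by rw [Finset.card_insert_of_notMem hx, s.2]
  calc ∑ i ∈ s.1, ψ i ≤ ∑ i ∈ insert x s.1, ψ i := by
        rw [Finset.sum_insert hx]; linarith [hpos x]
    _ ≤ Sig ψ (n+1) := le_ciSup (bdd_sums hC (n+1)) ⟨insert x s.1, hcard⟩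

include hpos hC in
lemma Sig_mono : Monotone (Sig ψ) :=
  monotone_nat_of_le_succ (Sig_le_sig_succ hpos hC)

include hpos hC in
lemma rearr_nonneg_s19 (n : ℕ) : 0 ≤ rearr ψ n := by
  rw [rearr_eq]; linarith [Sig_le_sig_succ hpos hC n]

include hC in
lemma Sig_concave (n : ℕ) : Sig ψ (n+2) + Sig ψ n ≤ 2 * Sig ψ (n+1) := by
  have h : ∀ s : {s : Finset ℕ // s.card = n+2}, ∀ t : {t : Finset ℕ // t.card = n},
      ∑ i ∈ s.1, ψ i + ∑ i ∈ t.1, ψ i ≤ 2 * Sig ψ (n+1) := by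
    rintro ⟨s, hs⟩ ⟨t, ht⟩
    have hcard : t.card < s.card := by omega
    obtain ⟨x, hxs, hxt⟩ : ∃ x ∈ s, x ∉ t := by
      by_contra h
      push_neg at h
      exact absurd (Finset.card_le_card h) (by omega)
    have h1 : (insert x t).card = n + 1 := by rw [Finset.card_insert_of_notMem hxt, ht]
    have h2 : (s.erase x).card = n + 1 := by
      simp [Finset.card_erase_of_mem hxs, hs]
    have e1 : ∑ i ∈ insert x t, ψ i ≤ Sig ψ (n+1) := le_ciSup (bdd_sums hC (n+1)) ⟨_, h1⟩
    have e2 : ∑ i ∈ s.erase x, ψ i ≤ Sig ψ (n+1) := le_ciSup (bdd_sums hC (n+1)) ⟨_, h2⟩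
    have k1 : ∑ i ∈ insert x t, ψ i = ψ x + ∑ i ∈ t, ψ i := Finset.sum_insert hxt
    have k2 : ∑ i ∈ s, ψ i = ψ x + ∑ i ∈ s.erase x, ψ i := (Finset.add_sum_erase _ _ hxs).symm
    linarith
  have h2 : Sig ψ (n+2) ≤ 2 * Sig ψ (n+1) - Sig ψ n := by
    refine ciSup_le fun s => ?_
    have : Sig ψ n ≤ 2 * Sig ψ (n+1) - ∑ i ∈ s.1, ψ i :=
      ciSup_le fun t => by linarith [h s t]
    linarith
  linarith

include hC in
lemma rearr_antitone : Antitone (rearr ψ) := by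
  refine antitone_nat_of_succ_le fun n => ?_
  simp only [rearr_eq]
  linarith [Sig_concave hC n]

include hC in
lemma sum_range_le_Sig (n : ℕ) : ∑ i ∈ range n, ψ i ≤ Sig ψ n :=
  le_ciSup (bdd_sums hC n) ⟨range n, card_range n⟩

end basic

section more
variable {ψ : ℕ → ℝ} {C : ℝ} (hpos : ∀ n, 0 ≤ ψ n) (hC : ∀ n, ψ n ≤ C)

-- rearr tends to zero
include hC in
lemma rearr_le_eps {ε : ℝ} (K : ℕ) (hK : ∀ k ≥ K, ψ k ≤ ε) :
    ∀ n ≥ K, rearr ψ n ≤ ε := by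
  intro n hn
  rw [rearr_eq, sub_le_iff_le_add, add_comm]
  refine ciSup_le fun s => ?_
  have hcard : (range K).card < s.1.card := by rw [card_range, s.2]; omega
  obtain ⟨x, hxs, hxK⟩ : ∃ x ∈ s.1, x ∉ range K := by
    by_contra h
    push_neg at h
    exact absurd (Finset.card_le_card h) (by omega)
  have hx : ψ x ≤ ε := hK x (by simpa using hxK)
  have h2 : (s.1.erase x).card = n := by simp [Finset.card_erase_of_mem hxs, s.2]
  have e2 : ∑ i ∈ s.1.erase x, ψ i ≤ Sig ψ n := le_ciSup (bdd_sums hC n) ⟨_, h2⟩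
  have k2 : ∑ i ∈ s.1, ψ i = ψ x + ∑ i ∈ s.1.erase x, ψ i := (Finset.add_sum_erase _ _ hxs).symm
  linarith

include hpos hC in
lemma rearr_tendsto (h0 : Tendsto ψ atTop (nhds 0)) :
    Tendsto (rearr ψ) atTop (nhds 0) := by
  rw [Metric.tendsto_atTop]
  intro ε hε
  have := (Metric.tendsto_atTop.mp h0) (ε/2) (by linarith)
  obtain ⟨K, hK⟩ := this
  refine ⟨K, fun n hn => ?_⟩
  have h1 : rearr ψ n ≤ ε/2 := by
    refine rearr_le_eps hC K (fun k hk => ?_) n hn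
    have := hK k hk
    rw [Real.dist_eq, sub_zero] at this
    exact le_of_lt (lt_of_le_of_lt (le_abs_self _) this)
  have h2 : 0 ≤ rearr ψ n := rearr_nonneg_s19 hpos hC n
  rw [Real.dist_eq, sub_zero, abs_of_nonneg h2]
  linarith

-- sums over card-n finsets of an antitone sequence
lemma antitone_sum_le (hanti : Antitone ψ) :
    ∀ (n : ℕ) (s : Finset ℕ), s.card = n → ∑ i ∈ s, ψ i ≤ ∑ i ∈ range n, ψ i := by
  intro n
  induction n with
  | zero => intro s hs; simp [Finset.card_eq_zero.mp hs]
  | succ n ih =>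
    intro s hs
    have hne : s.Nonempty := Finset.card_pos.mp (by omega)
    set x := s.max' hne with hx
    have hxs : x ∈ s := s.max'_mem hne
    have hsub : s ⊆ range (x+1) := fun y hy =>
      Finset.mem_range.mpr (Nat.lt_succ_of_le (s.le_max' y hy))
    have hxn : n ≤ x := by
      have := Finset.card_le_card hsub
      rw [hs, card_range] at this
      omega
    have h2 : (s.erase x).card = n := by simp [Finset.card_erase_of_mem hxs, hs]
    have := ih (s.erase x) h2
    have k2 : ∑ i ∈ s, ψ i = ψ x + ∑ i ∈ s.erase x, ψ i := (Finset.add_sum_erase _ _ hxs).symm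
    rw [Finset.sum_range_succ]
    have : ψ x ≤ ψ n := hanti hxn
    linarith

include hpos hC in
lemma Sig_antitone_eq (hanti : Antitone ψ) (n : ℕ) :
    Sig ψ n = ∑ i ∈ range n, ψ i := by
  refine le_antisymm (ciSup_le fun s => antitone_sum_le hanti n s.1 s.2)
    (sum_range_le_Sig hC n)

-- the tsum lemma
include hpos hC in
lemma tsum_ofReal_eq_iSup_Sig :
    ∑' j, ENNReal.ofReal (ψ j) = ⨆ n, ENNReal.ofReal (Sig ψ n) := by
  apply le_antisymm
  · rw [ENNReal.tsum_eq_iSup_sum]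
    refine iSup_le fun s => ?_
    rw [← ENNReal.ofReal_sum_of_nonneg (fun i _ => hpos i)]
    calc ENNReal.ofReal (∑ i ∈ s, ψ i)
        ≤ ENNReal.ofReal (Sig ψ s.card) :=
          ENNReal.ofReal_le_ofReal (le_ciSup (bdd_sums hC s.card) ⟨s, rfl⟩)
      _ ≤ ⨆ n, ENNReal.ofReal (Sig ψ n) := le_iSup (fun n => ENNReal.ofReal (Sig ψ n)) s.card
  · refine iSup_le fun n => ?_
    by_cases htop : ∑' j, ENNReal.ofReal (ψ j) = ⊤
    · simp [htop]
    · have hsum : ∀ s : {s : Finset ℕ // s.card = n},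
          ∑ i ∈ s.1, ψ i ≤ (∑' j, ENNReal.ofReal (ψ j)).toReal := by
        rintro ⟨s, hs⟩
        have h1 : ENNReal.ofReal (∑ i ∈ s, ψ i) ≤ ∑' j, ENNReal.ofReal (ψ j) := by
          rw [ENNReal.ofReal_sum_of_nonneg (fun i _ => hpos i)]
          exact ENNReal.sum_le_tsum s
        have h2 := ENNReal.toReal_mono htop h1
        rwa [ENNReal.toReal_ofReal (Finset.sum_nonneg fun i _ => hpos i)] at h2
      have : Sig ψ n ≤ (∑' j, ENNReal.ofReal (ψ j)).toReal := ciSup_le hsum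
      calc ENNReal.ofReal (Sig ψ n) ≤ ENNReal.ofReal (∑' j, ENNReal.ofReal (ψ j)).toReal :=
            ENNReal.ofReal_le_ofReal this
        _ = ∑' j, ENNReal.ofReal (ψ j) := ENNReal.ofReal_toReal htop

end more

lemma tendsto_half : Tendsto (fun n : ℕ => n / 2) atTop atTop := by
  apply tendsto_atTop_atTop.mpr
  intro b
  exact ⟨2*b, fun a ha => by omega⟩

lemma tendsto_half' : Tendsto (fun n : ℕ => (n+1) / 2) atTop atTop := by
  apply tendsto_atTop_atTop.mpr
  intro b
  exact ⟨2*b, fun a ha => by omega⟩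

section summable_case
variable {η : ℕ → ℝ} (hpos : ∀ n, 0 ≤ η n) (h0 : Tendsto η atTop (nhds 0))

include hpos h0

theorem summable_case (hsum : Summable η) :
    ∃ ξ : ℕ → ℝ, Antitone ξ ∧ InC0Pos ξ ∧
      InftyMajorizes ξ η ∧ StrongMajorizes ξ η := by
  obtain ⟨C, hC⟩ : ∃ C, ∀ n, η n ≤ C := by
    obtain ⟨C, hC⟩ := h0.bddAbove_range
    exact ⟨C, fun n => hC ⟨n, rfl⟩⟩
  set r := rearr η with hr
  have hranti : Antitone r := rearr_antitone hC
  have hrpos : ∀ n, 0 ≤ r n := rearr_nonneg_s19 hpos hC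
  have hr0 : Tendsto r atTop (nhds 0) := rearr_tendsto hpos hC h0
  set ξ : ℕ → ℝ := fun n => r (n / 2) / 2 with hξ
  have hξanti : Antitone ξ := fun a b hab => by
    simp only [hξ]
    have : b / 2 ≤ a / 2 → r (a/2) ≤ r (b/2) := fun h => hranti h
    have := hranti (Nat.div_le_div_right hab : a/2 ≤ b/2)
    linarith
  have hξpos : ∀ n, 0 ≤ ξ n := fun n => by have := hrpos (n/2); simp only [hξ]; linarith
  have hξC : ∀ n, ξ n ≤ r 0 / 2 + 1 := fun n => by
    have := hranti (Nat.zero_le (n/2))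
    simp only [hξ]; linarith
  -- partial sums of ξ
  have hsumξ : ∀ n, ∑ k ∈ range n, ξ k = (Sig η (n/2) + Sig η ((n+1)/2)) / 2 := by
    intro n
    induction n with
    | zero => simp [Sig_zero]
    | succ n ih =>
      rw [Finset.sum_range_succ, ih]
      have h1 : (n+2)/2 = n/2 + 1 := by omega
      have h2 : rearr η (n/2) = Sig η (n/2 + 1) - Sig η (n/2) := rearr_eq η (n/2)
      rcases Nat.even_or_odd n with he | ho
      · obtain ⟨m, rfl⟩ := he
        have e1 : (m + m) / 2 = m := by omega
        have e2 : (m + m + 1) / 2 = m := by omega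
        have e3 : (m + m + 1 + 1) / 2 = m + 1 := by omega
        simp only [hξ, e1, e2, e3]
        rw [hr, rearr_eq]
        ring
      · obtain ⟨m, rfl⟩ := ho
        have e1 : (2*m + 1) / 2 = m := by omega
        have e2 : (2*m + 1 + 1) / 2 = m + 1 := by omega
        have e3 : (2*m + 1 + 1 + 1) / 2 = m + 1 := by omega
        simp only [hξ, e1, e2, e3]
        rw [hr, rearr_eq]
        ring
  have hSigξ : ∀ n, ∑ j ∈ range n, rearr ξ j = ∑ k ∈ range n, ξ k := by
    intro n
    rw [sum_range_rearr, Sig_antitone_eq hξpos hξC hξanti]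
  have hSigη : ∀ n, ∑ j ∈ range n, rearr η j = Sig η n := sum_range_rearr η
  have hmonoη : Monotone (Sig η) := Sig_mono hpos hC
  -- first majorization inequality
  have hmaj1 : ∀ n, ∑ j ∈ range n, rearr ξ j ≤ ∑ j ∈ range n, rearr η j := by
    intro n
    rw [hSigξ, hSigη, hsumξ]
    have l1 : Sig η (n/2) ≤ Sig η n := hmonoη (by omega)
    have l2 : Sig η ((n+1)/2) ≤ Sig η n := hmonoη (by omega)
    linarith
  -- tsum equality
  have htsum : (∑' j, ENNReal.ofReal (ξ j)) = ∑' j, ENNReal.ofReal (η j) := by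
    rw [tsum_ofReal_eq_iSup_Sig hξpos hξC, tsum_ofReal_eq_iSup_Sig hpos hC]
    apply le_antisymm
    · refine iSup_le fun n => ?_
      rw [Sig_antitone_eq hξpos hξC hξanti, hsumξ]
      have l1 : Sig η (n/2) ≤ Sig η ((n+1)/2) := hmonoη (by omega)
      calc ENNReal.ofReal ((Sig η (n/2) + Sig η ((n+1)/2)) / 2)
          ≤ ENNReal.ofReal (Sig η ((n+1)/2)) := ENNReal.ofReal_le_ofReal (by linarith)
        _ ≤ _ := le_iSup (fun m => ENNReal.ofReal (Sig η m)) ((n+1)/2)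
    · refine iSup_le fun m => ?_
      have : Sig η m = Sig ξ (2*m) := by
        rw [Sig_antitone_eq hξpos hξC hξanti, hsumξ]
        have e1 : (2*m)/2 = m := by omega
        have e2 : (2*m+1)/2 = m := by omega
        rw [e1, e2]; ring
      rw [this]
      exact le_iSup (fun n => ENNReal.ofReal (Sig ξ n)) (2*m)
  have hmaj : Majorizes ξ η := ⟨hmaj1, htsum⟩
  refine ⟨ξ, hξanti, ⟨hξpos, ?_⟩, ?_, ?_⟩
  · -- tendsto 0
    have : Tendsto (fun n : ℕ => r (n/2)) atTop (nhds 0) := hr0.comp tendsto_half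
    have := this.div_const 2
    simpa using this
  · -- InftyMajorizes
    intro p
    refine ⟨hmaj, p + 1, fun n hn => ?_⟩
    rw [hSigξ, hSigη, hsumξ]
    have l1 : Sig η ((n+p)/2) ≤ Sig η n := hmonoη (by omega)
    have l2 : Sig η ((n+p+1)/2) ≤ Sig η n := hmonoη (by omega)
    linarith
  · -- StrongMajorizes
    refine ⟨hmaj1, ?_⟩
    have hbdd : BddAbove (Set.range (Sig η)) := by
      refine ⟨∑' i, η i, ?_⟩
      rintro _ ⟨n, rfl⟩
      exact ciSup_le fun s => Summable.sum_le_tsum s.1 (fun i _ => hpos i) hsum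
    have hlim : Tendsto (Sig η) atTop (nhds (⨆ n, Sig η n)) :=
      tendsto_atTop_ciSup hmonoη hbdd
    set L := ⨆ n, Sig η n
    have hl1 : Tendsto (fun n : ℕ => Sig η (n/2)) atTop (nhds L) := hlim.comp tendsto_half
    have hl2 : Tendsto (fun n : ℕ => Sig η ((n+1)/2)) atTop (nhds L) := hlim.comp tendsto_half'
    have key : Tendsto (fun n => ∑ j ∈ range n, (rearr η j - rearr ξ j)) atTop (nhds 0) := by
      have heq : ∀ n, ∑ j ∈ range n, (rearr η j - rearr ξ j)
          = Sig η n - (Sig η (n/2) + Sig η ((n+1)/2)) / 2 := by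
        intro n
        rw [Finset.sum_sub_distrib, hSigξ, hSigη, hsumξ]
      rw [show (0:ℝ) = L - (L + L)/2 by ring]
      simp only [heq]
      exact hlim.sub ((hl1.add hl2).div_const 2)
    exact key.liminf_eq
end summable_case

section nonsummable_prelim
variable {η : ℕ → ℝ} {C : ℝ} (hpos : ∀ n, 0 ≤ η n) (hC : ∀ n, η n ≤ C)
  (h0 : Tendsto η atTop (nhds 0))

/-- the gap targets -/
noncomputable def dlt (j : ℕ) : ℝ := if j = 0 then 0 else 1/(j+1)

lemma dlt_nonneg (j : ℕ) : 0 ≤ dlt j := by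
  unfold dlt; split <;> positivity

lemma dlt_le_one (j : ℕ) : dlt j ≤ 1 := by
  unfold dlt
  split
  · norm_num
  · rw [div_le_one (by positivity)]
    have : (1:ℝ) ≤ (j:ℝ) + 1 := by
      have : (0:ℝ) ≤ j := Nat.cast_nonneg j
      linarith
    linarith

lemma dlt_pos {j : ℕ} (hj : j ≠ 0) : 0 < dlt j := by
  unfold dlt; rw [if_neg hj]; positivity

include hpos hC h0 in
lemma exists_next (htop : Tendsto (Sig η) atTop atTop) (t0 : ℕ) {ε : ℝ} (hε : 0 < ε) :
    ∃ t : ℕ, t0 < t ∧ 2 ≤ Sig η t - Sig η t0 ∧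
      Sig η t - Sig η t0 + 1 ≤ ε * ((t:ℝ) - t0) := by
  have hr0 := rearr_tendsto hpos hC h0
  obtain ⟨K0, hK0⟩ := (Metric.tendsto_atTop.mp hr0) (ε/2) (by linarith)
  set K := max K0 t0 with hK
  have hKr : ∀ k ≥ K, rearr η k ≤ ε/2 := by
    intro k hk
    have := hK0 k (le_trans (le_max_left _ _) hk)
    rw [Real.dist_eq, sub_zero] at this
    exact le_of_lt (lt_of_le_of_lt (le_abs_self _) this)
  obtain ⟨N0, hN0⟩ := exists_nat_ge ((Sig η K - Sig η t0 + 1) * (2/ε))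
  set N := max 1 N0 with hN2
  obtain ⟨M, hM⟩ := (htop.eventually_ge_atTop (Sig η t0 + 2)).exists_forall_of_atTop
  set t := max (max K M) (t0 + N) with ht
  have htK : K ≤ t := le_trans (le_max_left _ _) (le_max_left _ _)
  have htM : M ≤ t := le_trans (le_max_right _ _) (le_max_left _ _)
  have htN : t0 + N ≤ t := le_max_right _ _
  have ht0 : t0 < t := by have : 1 ≤ N := le_max_left _ _; omega
  refine ⟨t, ht0, by linarith [hM t htM], ?_⟩
  -- the sum bound
  have hsub : Sig η t - Sig η K = ∑ k ∈ Ico K t, rearr η k := by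
    rw [Finset.sum_Ico_eq_sub _ htK, sum_range_rearr, sum_range_rearr]
  have hsum_le : ∑ k ∈ Ico K t, rearr η k ≤ ((t:ℝ) - K) * (ε/2) := by
    calc ∑ k ∈ Ico K t, rearr η k ≤ ∑ _k ∈ Ico K t, (ε/2) :=
          Finset.sum_le_sum fun k hk => hKr k (Finset.mem_Ico.mp hk).1
      _ = ((t - K : ℕ) : ℝ) * (ε/2) := by rw [Finset.sum_const, Nat.card_Ico, nsmul_eq_mul]
      _ = ((t:ℝ) - K) * (ε/2) := by rw [Nat.cast_sub htK]
  have hcast1 : (N:ℝ) ≤ (t:ℝ) - t0 := by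
    have : (t0 + N : ℕ) ≤ t := htN
    have : ((t0 + N : ℕ):ℝ) ≤ (t:ℝ) := Nat.cast_le.mpr this
    push_cast at this ⊢
    linarith
  have hcast2 : (t:ℝ) - K ≤ (t:ℝ) - t0 := by
    have : t0 ≤ K := le_max_right _ _
    have : ((t0:ℕ):ℝ) ≤ (K:ℝ) := Nat.cast_le.mpr this
    linarith
  have hNb : Sig η K - Sig η t0 + 1 ≤ (ε/2) * N := by
    have hN0' : (N0:ℝ) ≤ N := Nat.cast_le.mpr (le_max_right _ _)
    have := hN0
    have h2 : (Sig η K - Sig η t0 + 1) * (2/ε) ≤ (N:ℝ) := by linarith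
    calc Sig η K - Sig η t0 + 1 = ((Sig η K - Sig η t0 + 1) * (2/ε)) * (ε/2) := by
          field_simp
      _ ≤ (N:ℝ) * (ε/2) := by
          apply mul_le_mul_of_nonneg_right h2 (by linarith)
      _ = (ε/2) * N := by ring
  have hposK : (0:ℝ) ≤ (t:ℝ) - K := by
    have : ((K:ℕ):ℝ) ≤ (t:ℝ) := Nat.cast_le.mpr htK; linarith
  calc Sig η t - Sig η t0 + 1 = (Sig η t - Sig η K) + (Sig η K - Sig η t0 + 1) := by ring
    _ ≤ ((t:ℝ) - K) * (ε/2) + (ε/2) * N := by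
        rw [hsub]; linarith
    _ ≤ ((t:ℝ) - t0) * (ε/2) + (ε/2) * ((t:ℝ) - t0) := by
        have h1 : ((t:ℝ) - K) * (ε/2) ≤ ((t:ℝ) - t0) * (ε/2) :=
          mul_le_mul_of_nonneg_right hcast2 (by linarith)
        have h2 : (ε/2) * (N:ℝ) ≤ (ε/2) * ((t:ℝ) - t0) :=
          mul_le_mul_of_nonneg_left hcast1 (by linarith)
        linarith
    _ = ε * ((t:ℝ) - t0) := by ring

/-- the slope of block `j` determined by endpoints -/
noncomputable def slp (η : ℕ → ℝ) (j t t' : ℕ) : ℝ :=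
  (Sig η t' - dlt (j+1) - Sig η t + dlt j) / ((t':ℝ) - t)

include hpos hC h0 in
lemma exists_T (htop : Tendsto (Sig η) atTop atTop) :
    ∃ T : ℕ → ℕ, T 0 = 0 ∧ (∀ j, T j < T (j+1)) ∧
      (∀ j, 2 ≤ Sig η (T (j+1)) - Sig η (T j)) ∧
      (∀ j, 0 < slp η j (T j) (T (j+1))) ∧
      (∀ j, slp η (j+1) (T (j+1)) (T (j+2)) ≤ slp η j (T j) (T (j+1))) ∧
      (∀ j, slp η j (T j) (T (j+1)) ≤ 1/(((j:ℝ)+1)*((j:ℝ)+2))) := by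
  have hstep : ∀ (j t : ℕ) (B : ℝ), 0 < B → ∃ t' : ℕ, t < t' ∧
      2 ≤ Sig η t' - Sig η t ∧ slp η j t t' ≤ min B (1/(((j:ℝ)+1)*((j:ℝ)+2))) ∧
      0 < slp η j t t' := by
    intro j t B hB
    have hεpos : 0 < min B (1/(((j:ℝ)+1)*((j:ℝ)+2))) := by
      apply lt_min hB; positivity
    obtain ⟨t', h1, h2, h3⟩ := exists_next hpos hC h0 htop t hεpos
    have hden : (0:ℝ) < (t':ℝ) - t := by
      have : ((t:ℕ):ℝ) < (t':ℝ) := Nat.cast_lt.mpr h1; linarith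
    refine ⟨t', h1, h2, ?_, ?_⟩
    · unfold slp
      rw [div_le_iff₀ hden]
      have hd1 : dlt j ≤ 1 := dlt_le_one j
      have hd2 : 0 ≤ dlt (j+1) := dlt_nonneg (j+1)
      calc Sig η t' - dlt (j+1) - Sig η t + dlt j ≤ Sig η t' - Sig η t + 1 := by linarith
        _ ≤ min B (1/(((j:ℝ)+1)*((j:ℝ)+2))) * ((t':ℝ) - t) := h3
    · unfold slp
      apply div_pos _ hden
      have hd1 : dlt (j+1) ≤ 1 := dlt_le_one (j+1)
      have hd2 : 0 ≤ dlt j := dlt_nonneg j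
      linarith
  choose nxt hn1 hn2 hn3 hn4 using hstep
  -- build the sequence of (t, B) with 0 < B
  let f : ℕ → {p : ℕ × ℝ // 0 < p.2} := fun j => Nat.rec
    ⟨(0, 1), one_pos⟩
    (fun j s => ⟨(nxt j s.1.1 s.1.2 s.2, slp η j s.1.1 (nxt j s.1.1 s.1.2 s.2)),
      hn4 j s.1.1 s.1.2 s.2⟩) j
  set T : ℕ → ℕ := fun j => (f j).1.1 with hT
  have hfsucc : ∀ j, f (j+1) = ⟨(nxt j (f j).1.1 (f j).1.2 (f j).2,
      slp η j (f j).1.1 (nxt j (f j).1.1 (f j).1.2 (f j).2)), hn4 _ _ _ _⟩ := fun j => rfl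
  have hTsucc : ∀ j, T (j+1) = nxt j (T j) (f j).1.2 (f j).2 := fun j => rfl
  have hB : ∀ j, (f (j+1)).1.2 = slp η j (T j) (T (j+1)) := fun j => rfl
  refine ⟨T, rfl, ?_, ?_, ?_, ?_, ?_⟩
  · intro j; rw [hTsucc j]; exact hn1 _ _ _ _
  · intro j; rw [hTsucc j]; exact hn2 _ _ _ _
  · intro j
    have := hn4 j (T j) (f j).1.2 (f j).2
    rw [← hTsucc j] at this
    exact this
  · intro j
    have := hn3 (j+1) (T (j+1)) (f (j+1)).1.2 (f (j+1)).2
    rw [← hTsucc (j+1)] at this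
    calc slp η (j+1) (T (j+1)) (T (j+2)) ≤ min ((f (j+1)).1.2) _ := this
      _ ≤ (f (j+1)).1.2 := min_le_left _ _
      _ = slp η j (T j) (T (j+1)) := hB j
  · intro j
    have := hn3 j (T j) (f j).1.2 (f j).2
    rw [← hTsucc j] at this
    exact le_trans this (min_le_right _ _)

end nonsummable_prelim

section nonsummable_case
variable {η : ℕ → ℝ} (hpos : ∀ n, 0 ≤ η n) (h0 : Tendsto η atTop (nhds 0))

include hpos h0 in
theorem nonsummable_case (hns : ¬ Summable η) :
    ∃ ξ : ℕ → ℝ, Antitone ξ ∧ InC0Pos ξ ∧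
      InftyMajorizes ξ η ∧ StrongMajorizes ξ η := by
  obtain ⟨C, hC⟩ : ∃ C, ∀ n, η n ≤ C := by
    obtain ⟨C, hC⟩ := h0.bddAbove_range
    exact ⟨C, fun n => hC ⟨n, rfl⟩⟩
  have htop : Tendsto (Sig η) atTop atTop := by
    have hps := (not_summable_iff_tendsto_nat_atTop_of_nonneg hpos).mp hns
    exact tendsto_atTop_mono (fun n => sum_range_le_Sig hC n) hps
  obtain ⟨T, hT0, hTlt, hTgap, hcpos, hcanti', hcle⟩ := exists_T hpos hC h0 htop
  set c : ℕ → ℝ := fun j => slp η j (T j) (T (j+1)) with hc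
  have hTmono : StrictMono T := strictMono_nat_of_lt_succ hTlt
  have hTge : ∀ j, j ≤ T j := fun j => hTmono.le_apply
  have hcanti : Antitone c := antitone_nat_of_succ_le hcanti'
  -- block index
  set J : ℕ → ℕ := fun n => Nat.findGreatest (fun j => T j ≤ n) n with hJ
  have hJ1 : ∀ n, T (J n) ≤ n := fun n =>
    Nat.findGreatest_spec (P := fun j => T j ≤ n) (Nat.zero_le n) (by show T 0 ≤ n; rw [hT0]; exact Nat.zero_le n)
  have hJ2 : ∀ n, n < T (J n + 1) := by
    intro n
    by_contra h
    push_neg at h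
    have h1 : J n + 1 ≤ n := le_trans (hTge (J n + 1)) h
    have h2 := Nat.le_findGreatest (P := fun j => T j ≤ n) h1 h
    have h3 : Nat.findGreatest (fun j => T j ≤ n) n = J n := rfl
    omega
  have hJuniq : ∀ j n, T j ≤ n → n < T (j+1) → J n = j := by
    intro j n h1 h2
    have hle : j ≤ J n := Nat.le_findGreatest (P := fun i => T i ≤ n) (le_trans (hTge j) h1) h1
    by_contra hne
    have hlt : j + 1 ≤ J n := by omega
    have := le_trans (hTmono.monotone hlt) (hJ1 n)
    omega
  have hJmono : Monotone J := fun a b hab =>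
    Nat.le_findGreatest (P := fun j => T j ≤ b) (le_trans (Nat.findGreatest_le a) hab)
      (le_trans (hJ1 a) hab)
  have hJT : ∀ j, J (T j) = j := fun j => hJuniq j (T j) le_rfl (hTlt j)
  -- the sequence
  set ξ : ℕ → ℝ := fun n => c (J n) with hξ
  have hξanti : Antitone ξ := fun a b hab => hcanti (hJmono hab)
  have hξpos : ∀ n, 0 ≤ ξ n := fun n => le_of_lt (hcpos (J n))
  have hξC : ∀ n, ξ n ≤ ξ 0 := fun n => hξanti (Nat.zero_le n)
  -- constant on blocks
  have hblock : ∀ j k, T j ≤ k → k < T (j+1) → ξ k = c j := by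
    intro j k h1 h2
    simp only [hξ, hJuniq j k h1 h2]
  have hIco : ∀ j n, T j ≤ n → n ≤ T (j+1) →
      ∑ k ∈ Ico (T j) n, ξ k = ((n:ℝ) - T j) * c j := by
    intro j n h1 h2
    have : ∀ k ∈ Ico (T j) n, ξ k = c j := by
      intro k hk
      obtain ⟨hk1, hk2⟩ := Finset.mem_Ico.mp hk
      exact hblock j k hk1 (by omega)
    rw [Finset.sum_congr rfl this, Finset.sum_const, Nat.card_Ico, nsmul_eq_mul,
      Nat.cast_sub h1]
  set Ξ : ℕ → ℝ := fun n => ∑ k ∈ range n, ξ k with hΞ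
  have hΞIco : ∀ {m n : ℕ}, m ≤ n → Ξ n - Ξ m = ∑ k ∈ Ico m n, ξ k := by
    intro m n h
    rw [Finset.sum_Ico_eq_sub _ h]
  have hslp : ∀ j, ((T (j+1) : ℝ) - T j) * c j
      = Sig η (T (j+1)) - dlt (j+1) - Sig η (T j) + dlt j := by
    intro j
    have hden : (0:ℝ) < (T (j+1):ℝ) - T j := by
      have : ((T j : ℕ):ℝ) < (T (j+1):ℝ) := Nat.cast_lt.mpr (hTlt j)
      linarith
    rw [hc]
    unfold slp
    field_simp
  -- value at block ends
  have hΞT : ∀ j, Ξ (T j) = Sig η (T j) - dlt j := by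
    intro j
    induction j with
    | zero => simp [hΞ, hT0, Sig_zero, dlt]
    | succ j ih =>
      have h1 : Ξ (T (j+1)) - Ξ (T j) = ((T (j+1):ℝ) - T j) * c j := by
        rw [hΞIco (le_of_lt (hTlt j)), hIco j (T (j+1)) (le_of_lt (hTlt j)) le_rfl]
      rw [hslp j] at h1
      linarith
  -- gap lower bound on blocks
  have hGap : ∀ j n, T j ≤ n → n ≤ T (j+1) →
      min (dlt j) (dlt (j+1)) ≤ Sig η n - Ξ n := by
    intro j n h1 h2
    have hGn : Sig η n - Ξ n = dlt j + ∑ k ∈ Ico (T j) n, (rearr η k - c j) := by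
      have e1 : Sig η n - Sig η (T j) = ∑ k ∈ Ico (T j) n, rearr η k := by
        rw [Finset.sum_Ico_eq_sub _ h1, sum_range_rearr, sum_range_rearr]
      have e2 : Ξ n - Ξ (T j) = ∑ k ∈ Ico (T j) n, ξ k := hΞIco h1
      have e3 := hIco j n h1 h2
      have e4 : ∑ k ∈ Ico (T j) n, (rearr η k - c j)
          = (∑ k ∈ Ico (T j) n, rearr η k) - ((n:ℝ) - T j) * c j := by
        rw [Finset.sum_sub_distrib, Finset.sum_const, Nat.card_Ico, nsmul_eq_mul,
          Nat.cast_sub h1]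
      rw [e4, ← e1]
      have := hΞT j
      linarith
    by_cases hcase : ∀ k ∈ Ico (T j) n, 0 ≤ rearr η k - c j
    · have : 0 ≤ ∑ k ∈ Ico (T j) n, (rearr η k - c j) := Finset.sum_nonneg hcase
      calc min (dlt j) (dlt (j+1)) ≤ dlt j := min_le_left _ _
        _ ≤ Sig η n - Ξ n := by linarith
    · push_neg at hcase
      obtain ⟨k0, hk0mem, hk0⟩ := hcase
      obtain ⟨hk01, hk02⟩ := Finset.mem_Ico.mp hk0mem
      -- end gap
      have hGe : Sig η (T (j+1)) - Ξ (T (j+1)) = dlt j + ∑ k ∈ Ico (T j) (T (j+1)), (rearr η k - c j) := by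
        have e1 : Sig η (T (j+1)) - Sig η (T j) = ∑ k ∈ Ico (T j) (T (j+1)), rearr η k := by
          rw [Finset.sum_Ico_eq_sub _ (le_of_lt (hTlt j)), sum_range_rearr, sum_range_rearr]
        have e4 : ∑ k ∈ Ico (T j) (T (j+1)), (rearr η k - c j)
            = (∑ k ∈ Ico (T j) (T (j+1)), rearr η k) - ((T (j+1):ℝ) - T j) * c j := by
          rw [Finset.sum_sub_distrib, Finset.sum_const, Nat.card_Ico, nsmul_eq_mul,
            Nat.cast_sub (le_of_lt (hTlt j))]
        rw [e4, ← e1]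
        have h5 := hΞT j
        have h6 := hΞT (j+1)
        have h7 := hslp j
        linarith
      have hranti : Antitone (rearr η) := rearr_antitone hC
      have hsplit : ∑ k ∈ Ico (T j) (T (j+1)), (rearr η k - c j)
          = ∑ k ∈ Ico (T j) n, (rearr η k - c j) + ∑ k ∈ Ico n (T (j+1)), (rearr η k - c j) := by
        rw [Finset.sum_Ico_consecutive _ h1 h2]
      have htail : ∑ k ∈ Ico n (T (j+1)), (rearr η k - c j) ≤ 0 := by
        apply Finset.sum_nonpos
        intro k hk
        obtain ⟨hk1, _⟩ := Finset.mem_Ico.mp hk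
        have : rearr η k ≤ rearr η k0 := hranti (by omega)
        linarith
      have hend : Sig η (T (j+1)) - Ξ (T (j+1)) = dlt (j+1) := by
        rw [hΞT (j+1)]; ring
      calc min (dlt j) (dlt (j+1)) ≤ dlt (j+1) := min_le_right _ _
        _ = Sig η (T (j+1)) - Ξ (T (j+1)) := hend.symm
        _ ≤ Sig η n - Ξ n := by
            rw [hGe, hGn, hsplit]; linarith
  have hmin_nonneg : ∀ j, 0 ≤ min (dlt j) (dlt (j+1)) :=
    fun j => le_min (dlt_nonneg j) (dlt_nonneg (j+1))
  have hF5 : ∀ n, Ξ n ≤ Sig η n := by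
    intro n
    have := hGap (J n) n (hJ1 n) (le_of_lt (hJ2 n))
    linarith [hmin_nonneg (J n)]
  -- rearr ξ partial sums
  have hSigξ : ∀ n, ∑ j ∈ range n, rearr ξ j = Ξ n := by
    intro n
    rw [sum_range_rearr, Sig_antitone_eq hξpos hξC hξanti]
  have hSigη : ∀ n, ∑ j ∈ range n, rearr η j = Sig η n := sum_range_rearr η
  -- growth of Sig η (T j)
  have hgrow : ∀ j : ℕ, 2 * (j:ℝ) ≤ Sig η (T j) := by
    intro j
    induction j with
    | zero => simp [hT0, Sig_zero]
    | succ j ih =>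
      have := hTgap j
      push_cast
      linarith
  -- tsum equality
  have htsum : (∑' j, ENNReal.ofReal (ξ j)) = ∑' j, ENNReal.ofReal (η j) := by
    have hη_top : (∑' j, ENNReal.ofReal (η j)) = ⊤ := by
      by_contra h
      apply hns
      have hsnn : Summable (fun n => (η n).toNNReal) :=
        ENNReal.tsum_coe_ne_top_iff_summable.mp h
      have : Summable (fun n => ((η n).toNNReal : ℝ)) := NNReal.summable_coe.mpr hsnn
      refine this.congr fun n => Real.coe_toNNReal _ (hpos n)
    rw [hη_top, tsum_ofReal_eq_iSup_Sig hξpos hξC]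
    rw [eq_top_iff, ← ENNReal.iSup_natCast]
    refine iSup_le fun m => ?_
    have h1 : (m:ℝ) ≤ Ξ (T (m+1)) := by
      rw [hΞT (m+1)]
      have := hgrow (m+1)
      have := dlt_le_one (m+1)
      push_cast at *
      linarith
    calc (m : ENNReal) = ENNReal.ofReal (m:ℝ) := (ENNReal.ofReal_natCast m).symm
      _ ≤ ENNReal.ofReal (Ξ (T (m+1))) := ENNReal.ofReal_le_ofReal h1
      _ = ENNReal.ofReal (Sig ξ (T (m+1))) := by
          rw [Sig_antitone_eq hξpos hξC hξanti]
      _ ≤ ⨆ n, ENNReal.ofReal (Sig ξ n) := le_iSup (fun n => ENNReal.ofReal (Sig ξ n)) (T (m+1))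
  have hmaj1 : ∀ n, ∑ j ∈ range n, rearr ξ j ≤ ∑ j ∈ range n, rearr η j := by
    intro n
    rw [hSigξ, hSigη]
    exact hF5 n
  have hmaj : Majorizes ξ η := ⟨hmaj1, htsum⟩
  refine ⟨ξ, hξanti, ⟨hξpos, ?_⟩, ?_, ?_⟩
  · -- tendsto 0
    rw [Metric.tendsto_atTop]
    intro ε hε
    obtain ⟨j, hj⟩ := exists_nat_one_div_lt hε
    refine ⟨T j, fun n hn => ?_⟩
    have h1 : ξ n ≤ ξ (T j) := hξanti hn
    have h2 : ξ (T j) = c j := by simp only [hξ, hJT j]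
    have h3 : c j ≤ 1/(((j:ℝ)+1)*((j:ℝ)+2)) := hcle j
    have h4 : 1/(((j:ℝ)+1)*((j:ℝ)+2)) ≤ 1/((j:ℝ)+1) := by
      apply div_le_div_of_nonneg_left one_pos.le (by positivity)
      nlinarith [Nat.cast_nonneg (α := ℝ) j]
    rw [Real.dist_eq, sub_zero, abs_of_nonneg (hξpos n)]
    calc ξ n ≤ 1/((j:ℝ)+1) := by linarith
      _ < ε := hj
  · -- InftyMajorizes
    intro p
    refine ⟨hmaj, T (p+1), fun n hn => ?_⟩
    rw [hSigξ, hSigη]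
    set j := J n with hj
    have hjge : p + 1 ≤ j := by
      have := hJmono hn
      rwa [hJT (p+1)] at this
    have hjne : j ≠ 0 := by omega
    -- Ξ (n+p) ≤ Ξ n + p * c j
    have hstep : Ξ (n+p) - Ξ n ≤ (p:ℝ) * c j := by
      rw [hΞIco (Nat.le_add_right n p)]
      calc ∑ k ∈ Ico n (n+p), ξ k ≤ ∑ _k ∈ Ico n (n+p), ξ n :=
            Finset.sum_le_sum fun k hk => hξanti (Finset.mem_Ico.mp hk).1
        _ = (p:ℝ) * ξ n := by
            rw [Finset.sum_const, Nat.card_Ico, nsmul_eq_mul]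
            have hnp : n + p - n = p := by omega
            rw [hnp]
        _ = (p:ℝ) * c j := by rw [hξ]
    have hpc : (p:ℝ) * c j ≤ min (dlt j) (dlt (j+1)) := by
      have h1 : (0:ℝ) < ((j:ℝ)+1)*((j:ℝ)+2) := by positivity
      have h2 : (p:ℝ) * c j ≤ (p:ℝ) * (1/(((j:ℝ)+1)*((j:ℝ)+2))) := by
        apply mul_le_mul_of_nonneg_left (hcle j) (Nat.cast_nonneg p)
      have hp_le : (p:ℝ) ≤ (j:ℝ) + 1 := by
        have : (p:ℝ) ≤ (j:ℝ) := by exact_mod_cast le_trans (Nat.le_succ p) hjge |>.trans le_rfl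
        linarith
      have h3 : (p:ℝ) * (1/(((j:ℝ)+1)*((j:ℝ)+2))) ≤ 1/((j:ℝ)+2) := by
        rw [mul_one_div, div_le_div_iff₀ h1 (by positivity)]
        nlinarith [Nat.cast_nonneg (α := ℝ) j]
      have hdj : dlt (j+1) = 1/((j:ℝ)+2) := by
        unfold dlt
        rw [if_neg (Nat.succ_ne_zero j)]
        push_cast; ring_nf
      have hdj2 : 1/((j:ℝ)+2) ≤ dlt j := by
        unfold dlt
        rw [if_neg hjne]
        apply div_le_div_of_nonneg_left one_pos.le (by positivity)
        linarith
      rw [le_min_iff, hdj]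
      constructor
      · linarith
      · linarith
    have hGn := hGap j n (hJ1 n) (le_of_lt (hJ2 n))
    linarith
  · -- StrongMajorizes
    refine ⟨hmaj1, ?_⟩
    have heq : (fun n => ∑ j ∈ range n, (rearr η j - rearr ξ j)) = fun n => Sig η n - Ξ n := by
      funext n
      rw [Finset.sum_sub_distrib, hSigξ, hSigη]
    rw [heq]
    have hfreq : ∀ ε > 0, ∃ᶠ n in atTop, Sig η n - Ξ n ≤ ε := by
      intro ε hε
      rw [Filter.frequently_atTop]
      intro N
      obtain ⟨j0, hj0⟩ := exists_nat_one_div_lt hε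
      set j := max (j0+1) N with hjdef
      refine ⟨T j, le_trans (le_trans (le_max_right _ _) (hTge j)) le_rfl, ?_⟩
      rw [hΞT j]
      have h1 : dlt j ≤ 1/((j0:ℝ)+1) := by
        unfold dlt
        have hjne : j ≠ 0 := by have := le_max_left (j0+1) N; omega
        rw [if_neg hjne]
        apply div_le_div_of_nonneg_left one_pos.le (by positivity)
        have : (j0:ℝ) + 1 ≤ (j:ℝ) := by
          have : j0 + 1 ≤ j := le_max_left _ _
          exact_mod_cast this
        linarith
      have : Sig η (T j) - (Sig η (T j) - dlt j) = dlt j := by ring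
      rw [this]
      linarith
    have hge : ∀ n, 0 ≤ Sig η n - Ξ n := fun n => by linarith [hF5 n]
    have hbdd : IsBoundedUnder (· ≥ ·) atTop (fun n => Sig η n - Ξ n) :=
      Filter.isBoundedUnder_of ⟨0, fun n => hge n⟩
    have hcob : IsCoboundedUnder (· ≥ ·) atTop (fun n => Sig η n - Ξ n) := by
      apply Filter.IsCoboundedUnder.of_frequently_le
      exact (hfreq 1 one_pos).mono fun n h => h
    have hle : liminf (fun n => Sig η n - Ξ n) atTop ≤ 0 := by
      apply le_of_forall_pos_le_add
      intro ε hε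
      have := Filter.liminf_le_of_frequently_le (hfreq ε hε) hbdd
      linarith
    have hge' : 0 ≤ liminf (fun n => Sig η n - Ξ n) atTop :=
      Filter.le_liminf_of_le hcob (Filter.Eventually.of_forall hge)
    linarith
end nonsummable_case

theorem statement19 (η : ℕ → ℝ) (hη : InC0Pos η) :
    ∃ ξ : ℕ → ℝ, Antitone ξ ∧ InC0Pos ξ ∧
      InftyMajorizes ξ η ∧ StrongMajorizes ξ η := by
  obtain ⟨hpos, h0⟩ := hη
  by_cases hsum : Summable η
  · exact summable_case hpos h0 hsum
  · exact nonsummable_case hpos h0 hsum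
end
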